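/- arXiv:1504.00044 — 3 statements merged into one kernel-verified Lean document; each statement's English description precedes it below -/
import Mathlib

section
/- Assume that T := sup_{δ ∈ [0,1]} T_c^δ < +∞ (the case δ = 0 being the unperturbed system), and for each δ ∈ [0,1] let θ̄ := x̄₂ − x̄₁ on [0,T_c^δ], extended by θ̄(T_c^δ) = 0. Then there exists C > 0, depending only on s, γ, ‖σ‖_∞, x₂⁰ − x₁⁰ and T but not on δ, such that for every δ ∈ [0,1] and all t, t' ∈ [0,T_c^δ]: |θ̄(t) − θ̄(t')| ≤ C |t − t'|^{1/(2s+1)}. -/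
open Real Filter Set MeasureTheory

noncomputable section

/-- The fractional Laplacian of order `2s` (principal-value form). -/
def fracLap (s : ℝ) (φ : ℝ → ℝ) (x : ℝ) : ℝ :=
  (1/2) * ∫ y : ℝ, (φ (x + y) + φ (x - y) - 2 * φ x) / |y| ^ (1 + 2*s)

/-- Assumptions on the periodic potential `W`. -/
structure IsPotential (W : ℝ → ℝ) : Prop where
  contDiff : ContDiff ℝ 3 W
  holder3 : ∃ C r : NNReal, 0 < (r : ℝ) ∧ (r : ℝ) < 1 ∧ HolderWith C r (iteratedDeriv 3 W)
  periodic : ∀ v : ℝ, W (v + 1) = W v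
  zero_int : ∀ n : ℤ, W (n : ℝ) = 0
  pos_nonint : ∀ v : ℝ, (∀ n : ℤ, v ≠ (n : ℝ)) → 0 < W v
  second_deriv_pos : 0 < deriv (deriv W) 0

/-- The basic layer solution `u`. -/
structure IsLayer (s : ℝ) (W u : ℝ → ℝ) : Prop where
  diff : Differentiable ℝ u
  eqn : ∀ x, fracLap s u x = deriv W (u x)
  deriv_pos : ∀ x, 0 < deriv u x
  lim_bot : Tendsto u atBot (nhds 0)
  lim_top : Tendsto u atTop (nhds 1)
  half : u 0 = 1/2

/-- Assumptions on the external stress `σ`. -/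
structure SigmaOK (s : ℝ) (σ : ℝ → ℝ → ℝ) : Prop where
  bounded : ∃ B : ℝ, ∀ t x : ℝ, 0 ≤ t → |σ t x| ≤ B
  ucont : UniformContinuousOn (fun p : ℝ × ℝ => σ p.1 p.2) (Ici 0 ×ˢ univ)
  deriv_bound : ∃ M : ℝ, 0 < M ∧ ∃ α : ℝ, s < α ∧ α < 1 ∧
    (∀ t x : ℝ, 0 ≤ t →
      |deriv (fun ξ => σ t ξ) x| + |deriv (fun τ => σ τ x) t| ≤ M) ∧
    (∀ t x h : ℝ, 0 ≤ t →
      |deriv (fun ξ => σ t ξ) (x + h) - deriv (fun ξ => σ t ξ) x| ≤ M * |h| ^ α)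

/-- `v` is a bounded pointwise solution of `ε ∂_t v = I_s v − ε^{−2s} W'(v) + σ`
with initial datum `v0`. -/
def SolvesPDE (s ε : ℝ) (W : ℝ → ℝ) (σ : ℝ → ℝ → ℝ) (v0 : ℝ → ℝ) (v : ℝ → ℝ → ℝ) : Prop :=
  (∃ B : ℝ, ∀ t x : ℝ, |v t x| ≤ B) ∧
  (∀ x : ℝ, v 0 x = v0 x) ∧
  (∀ t : ℝ, 0 < t → ∀ x : ℝ,
    HasDerivAt (fun τ => v τ x)
      ((1/ε) * (fracLap s (v t) x - (1/ε ^ (2*s)) * deriv W (v t x) + σ t x)) t)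

/-- The `δ`-perturbed two-particle system with collision time `Tc`
(the case `δ = 0` is the unperturbed one). -/
def TwoPartPert (s γ δ : ℝ) (σ : ℝ → ℝ → ℝ) (x10 x20 Tc : ℝ) (x1 x2 : ℝ → ℝ) : Prop :=
  x1 0 = x10 - δ ∧ x2 0 = x20 + δ ∧
  ContinuousOn x1 (Ico 0 Tc) ∧ ContinuousOn x2 (Ico 0 Tc) ∧
  (∀ t ∈ Ioo (0:ℝ) Tc,
    HasDerivAt x1 (γ * (1/(2*s*(x2 t - x1 t) ^ (2*s)) - σ t (x1 t) - δ)) t ∧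
    HasDerivAt x2 (γ * (-(1/(2*s*(x2 t - x1 t) ^ (2*s))) + σ t (x2 t) + δ)) t) ∧
  (∀ t ∈ Ico (0:ℝ) Tc, x1 t < x2 t) ∧
  Tendsto (fun t => x2 t - x1 t) (nhdsWithin Tc (Iio Tc)) (nhds 0)

/-- Orientations of the three transition layers. -/
def zeta : Fin 3 → ℝ := ![1, -1, 1]

/-- The `δ`-perturbed three-particle system with collision time `Tc`
(the case `δ = 0` is the unperturbed one). -/
def ThreePartPert (s γ δ : ℝ) (σ : ℝ → ℝ → ℝ) (X0 : Fin 3 → ℝ) (Tc : ℝ)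
    (X : Fin 3 → ℝ → ℝ) : Prop :=
  (∀ i, X i 0 = X0 i - zeta i * δ) ∧
  (∀ i, ContinuousOn (X i) (Ico 0 Tc)) ∧
  (∀ i, ∀ t ∈ Ioo (0:ℝ) Tc,
    HasDerivAt (X i)
      (γ * ((∑ j ∈ Finset.univ.erase i,
          zeta i * zeta j * (X i t - X j t) / (2*s*|X i t - X j t| ^ (1+2*s)))
        - zeta i * σ t (X i t) - zeta i * δ)) t) ∧
  (∀ t ∈ Ico (0:ℝ) Tc, X 0 t < X 1 t ∧ X 1 t < X 2 t) ∧
  Tendsto (fun t => min (X 1 t - X 0 t) (X 2 t - X 1 t)) (nhdsWithin Tc (Iio Tc)) (nhds 0)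

/-- The corrector equation, together with the decay at infinity. -/
def CorrectorEqn (s η : ℝ) (W u ψ : ℝ → ℝ) : Prop :=
  (∀ x, fracLap s ψ x - deriv (deriv W) (u x) * ψ x
      = deriv u x + η * (deriv (deriv W) (u x) - deriv (deriv W) 0)) ∧
  Tendsto ψ atBot (nhds 0) ∧ Tendsto ψ atTop (nhds 0)

/-- The layer problem (without regularity). -/
def LayerEqn (s : ℝ) (W u : ℝ → ℝ) : Prop :=
  (∀ x, fracLap s u x = deriv W (u x)) ∧ (∀ x, 0 < deriv u x) ∧
  Tendsto u atBot (nhds 0) ∧ Tendsto u atTop (nhds 1) ∧ u 0 = 1/2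

/-- Membership in `C^{2,α}(ℝ)` for some `α ∈ (0,1)`. -/
def C2Holder (u : ℝ → ℝ) : Prop :=
  ContDiff ℝ 2 u ∧ ∃ C r : NNReal, 0 < (r : ℝ) ∧ (r : ℝ) < 1 ∧ HolderWith C r (iteratedDeriv 2 u)

def heaviside (x : ℝ) : ℝ := if 0 < x then 1 else 0

/-- The barrier `v̄_ε` for the two-particle system, where the velocities `c̄ᵢ = ẋ̄ᵢ`
are expressed through the right-hand side of the ODE system. -/
def vbar2 (s γ ε δ β : ℝ) (u ψ : ℝ → ℝ) (σ : ℝ → ℝ → ℝ) (x1 x2 : ℝ → ℝ) (t x : ℝ) : ℝ :=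
  ε ^ (2*s) * (σ t x + δ) / β + u ((x - x1 t)/ε) + u ((x2 t - x)/ε) - 1
    - ε ^ (2*s) * (γ * (1/(2*s*(x2 t - x1 t) ^ (2*s)) - σ t (x1 t) - δ)) * ψ ((x - x1 t)/ε)
    + ε ^ (2*s) * (γ * (-(1/(2*s*(x2 t - x1 t) ^ (2*s))) + σ t (x2 t) + δ)) * ψ ((x2 t - x)/ε)

/-- The barrier `v̄_ε` for the three-particle system, where the velocities `c̄ᵢ = ẋ̄ᵢ`
are expressed through the right-hand side of the ODE system. -/
def vbar3 (s γ ε δ β : ℝ) (u ψ : ℝ → ℝ) (σ : ℝ → ℝ → ℝ) (X : Fin 3 → ℝ → ℝ) (t x : ℝ) : ℝ :=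
  ε ^ (2*s) * (σ t x + δ) / β + (∑ i, u (zeta i * (x - X i t)/ε)) - 1
    - ∑ i, zeta i * ε ^ (2*s)
        * (γ * ((∑ j ∈ Finset.univ.erase i,
            zeta i * zeta j * (X i t - X j t) / (2*s*|X i t - X j t| ^ (1+2*s)))
          - zeta i * σ t (X i t) - zeta i * δ))
        * ψ (zeta i * (x - X i t)/ε)

/-- The hat system for two particles, solved on `[0,T]` with prescribed initial data. -/
def HatSys2 (s γ δ : ℝ) (σ : ℝ → ℝ → ℝ) (a b T : ℝ) (x1 x2 : ℝ → ℝ) : Prop :=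
  x1 0 = a ∧ x2 0 = b ∧
  ContinuousOn x1 (Icc 0 T) ∧ ContinuousOn x2 (Icc 0 T) ∧
  (∀ t ∈ Ioo (0:ℝ) T,
    HasDerivAt x1 (γ * (1/(2*s*(x2 t - x1 t) ^ (2*s)) - σ t (x1 t) - δ)) t ∧
    HasDerivAt x2 (γ * (-(1/(2*s*(x2 t - x1 t) ^ (2*s))) + σ t (x2 t) + δ)) t) ∧
  (∀ t ∈ Icc (0:ℝ) T, x1 t < x2 t)

/-- The hat system for three particles, solved on `[0,T]` with prescribed initial data. -/
def HatSys3 (s γ δ : ℝ) (σ : ℝ → ℝ → ℝ) (a : Fin 3 → ℝ) (T : ℝ) (X : Fin 3 → ℝ → ℝ) : Prop :=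
  (∀ i, X i 0 = a i) ∧
  (∀ i, ContinuousOn (X i) (Icc 0 T)) ∧
  (∀ i, ∀ t ∈ Ioo (0:ℝ) T,
    HasDerivAt (X i)
      (γ * ((∑ j ∈ Finset.univ.erase i,
          zeta i * zeta j * (X i t - X j t) / (2*s*|X i t - X j t| ^ (1+2*s)))
        - zeta i * σ t (X i t) - zeta i * δ)) t) ∧
  (∀ t ∈ Icc (0:ℝ) T, X 0 t < X 1 t ∧ X 1 t < X 2 t)

/-- The supersolution barrier used after collision in the three-particle case. -/
def hsup (s ε μ K ρ y : ℝ) (u : ℝ → ℝ) (t x : ℝ) : ℝ :=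
  u ((x - (y + K * ρ * (Real.exp (-μ * t / ε ^ (2*s+1)) - 1)))/ε)
    + ρ * Real.exp (-μ * t / ε ^ (2*s+1))

end

private lemma rpow_add_le_add_rpow_real {x y q : ℝ} (hx : 0 ≤ x) (hy : 0 ≤ y)
    (hq0 : 0 ≤ q) (hq1 : q ≤ 1) : (x + y) ^ q ≤ x ^ q + y ^ q := by
  have h := NNReal.rpow_add_le_add_rpow x.toNNReal y.toNNReal hq0 hq1
  have h' := NNReal.coe_le_coe.2 h
  push_cast at h'
  simpa [Real.coe_toNNReal x hx, Real.coe_toNNReal y hy] using h'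

private lemma sub_le_rpow_diff {a b p : ℝ} (hp : 1 ≤ p) (hb : 0 ≤ b) (hba : b ≤ a) :
    a - b ≤ (a ^ p - b ^ p) ^ (1/p) := by
  have hp0 : 0 < p := lt_of_lt_of_le one_pos hp
  have ha : 0 ≤ a := hb.trans hba
  have hbp : b ^ p ≤ a ^ p := Real.rpow_le_rpow hb hba hp0.le
  have h1 : a = ((a ^ p - b ^ p) + b ^ p) ^ (1/p) := by
    rw [sub_add_cancel, one_div, Real.rpow_rpow_inv ha hp0.ne']
  have h2 : ((a ^ p - b ^ p) + b ^ p) ^ (1/p) ≤ (a ^ p - b ^ p) ^ (1/p) + (b ^ p) ^ (1/p) :=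
    rpow_add_le_add_rpow_real (by linarith) (Real.rpow_nonneg hb p)
      (one_div_nonneg.2 hp0.le) (by rw [div_le_one hp0]; exact hp)
  have h3 : (b ^ p) ^ (1/p) = b := by rw [one_div, Real.rpow_rpow_inv hb hp0.ne']
  nlinarith [h1, h2, h3]

private lemma holder_from_lip {L p x y v : ℝ} (hp : 1 ≤ p) (hL : 0 < L)
    (hx : 0 ≤ x) (hy : 0 ≤ y) (hv : 0 ≤ v)
    (h : |x ^ p - y ^ p| ≤ L * v) : |x - y| ≤ L ^ (1/p) * v ^ (1/p) := by
  wlog hxy : y ≤ x generalizing x y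
  · rw [abs_sub_comm] at h ⊢
    exact this hy hx h (le_of_not_ge hxy)
  have hp0 : 0 < p := lt_of_lt_of_le one_pos hp
  have hyx : y ^ p ≤ x ^ p := Real.rpow_le_rpow hy hxy hp0.le
  have h1 : x - y ≤ (x ^ p - y ^ p) ^ (1/p) := sub_le_rpow_diff hp hy hxy
  have h2 : (x ^ p - y ^ p) ^ (1/p) ≤ (L * v) ^ (1/p) := by
    apply Real.rpow_le_rpow (by linarith) _ (one_div_nonneg.2 hp0.le)
    exact le_trans (le_abs_self _) h
  have h3 : (L * v) ^ (1/p) = L ^ (1/p) * v ^ (1/p) := Real.mul_rpow hL.le hv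
  rw [abs_of_nonneg (by linarith)]
  linarith

set_option maxHeartbeats 1000000 in
theorem statement_9
    (s γ : ℝ) (hs : s ∈ Ioo (0:ℝ) 1) (hγ : 0 < γ)
    (σ : ℝ → ℝ → ℝ) (hσ : SigmaOK s σ)
    (Sb : ℝ) (hSb : ∀ t x : ℝ, 0 ≤ t → |σ t x| ≤ Sb)
    (x10 x20 : ℝ) (hx : x10 < x20)
    (xb1 xb2 : ℝ → ℝ → ℝ) (Tcδ : ℝ → ℝ)
    (hpert : ∀ δ ∈ Icc (0:ℝ) 1,
      0 < Tcδ δ ∧ TwoPartPert s γ δ σ x10 x20 (Tcδ δ) (xb1 δ) (xb2 δ))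
    (T : ℝ) (hT : ∀ δ ∈ Icc (0:ℝ) 1, Tcδ δ ≤ T)
    (θb : ℝ → ℝ → ℝ)
    (hθb : ∀ δ t : ℝ, θb δ t = if t < Tcδ δ then xb2 δ t - xb1 δ t else 0) :
    ∃ C > (0:ℝ), ∀ δ ∈ Icc (0:ℝ) 1, ∀ t ∈ Icc (0:ℝ) (Tcδ δ), ∀ t' ∈ Icc (0:ℝ) (Tcδ δ),
      |θb δ t - θb δ t'| ≤ C * |t - t'| ^ (1/(2*s+1)) := by
  obtain ⟨hs0, hs1⟩ := hs
  have hSb0 : 0 ≤ Sb := le_trans (abs_nonneg _) (hSb 0 0 le_rfl)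
  have h0m : (0:ℝ) ∈ Icc (0:ℝ) 1 := ⟨le_rfl, zero_le_one⟩
  have hT0 : 0 ≤ T := le_trans (hpert 0 h0m).1.le (hT 0 h0m)
  have hp1 : (1:ℝ) ≤ 2*s+1 := by linarith
  have hp0 : (0:ℝ) < 2*s+1 := by linarith
  set B : ℝ := (x20 - x10) + 2 + γ * (2*Sb+2) * T with hBdef
  have hB0 : 0 ≤ B := by
    have : 0 ≤ γ * (2*Sb+2) * T := by positivity
    rw [hBdef]; linarith
  have hBs : 0 ≤ B ^ (2*s) := Real.rpow_nonneg hB0 _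
  set L : ℝ := (2*s+1) * γ * (B ^ (2*s) * (2*Sb+2) + 1/s) with hLdef
  have hL0 : 0 < L := by
    have h1s : 0 < 1/s := by positivity
    have h2 : 0 ≤ B ^ (2*s) * (2*Sb+2) := by positivity
    have h3 : 0 < (2*s+1) * γ := by positivity
    rw [hLdef]; nlinarith
  refine ⟨L ^ (1/(2*s+1)), Real.rpow_pos_of_pos hL0 _, ?_⟩
  intro δ hδ
  obtain ⟨hTc, hTP⟩ := hpert δ hδ
  simp only [TwoPartPert] at hTP
  obtain ⟨h10, h20, hc1, hc2, hode, hlt, hlim⟩ := hTP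
  have hθpos : ∀ t ∈ Ico (0:ℝ) (Tcδ δ), 0 < xb2 δ t - xb1 δ t :=
    fun t ht => sub_pos.2 (hlt t ht)
  -- Step 1 : a priori bound on θ
  have hbound : ∀ t ∈ Ico (0:ℝ) (Tcδ δ), xb2 δ t - xb1 δ t ≤ B := by
    have anti : AntitoneOn (fun t => xb2 δ t - xb1 δ t - γ * (2*Sb+2) * t)
        (Ico (0:ℝ) (Tcδ δ)) := by
      apply antitoneOn_of_hasDerivWithinAt_nonpos (convex_Ico _ _)
        (f' := fun t => (γ * (-(1/(2*s*(xb2 δ t - xb1 δ t) ^ (2*s))) + σ t (xb2 δ t) + δ)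
          - γ * (1/(2*s*(xb2 δ t - xb1 δ t) ^ (2*s)) - σ t (xb1 δ t) - δ)) - γ * (2*Sb+2))
      · exact (hc2.sub hc1).sub (Continuous.continuousOn (by continuity))
      · intro t ht
        rw [interior_Ico] at ht
        obtain ⟨hd1, hd2⟩ := hode t ht
        exact (((hd2.sub hd1).sub
          (by simpa using (hasDerivAt_id t).const_mul (γ * (2*Sb+2)))).hasDerivWithinAt)
      · intro t ht
        rw [interior_Ico] at ht
        have hθt : 0 < xb2 δ t - xb1 δ t := hθpos t ⟨ht.1.le, ht.2⟩
        have hY : 0 < (xb2 δ t - xb1 δ t) ^ (2*s) := Real.rpow_pos_of_pos hθt _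
        have hA : 0 < 1/(2*s*(xb2 δ t - xb1 δ t) ^ (2*s)) :=
          one_div_pos.mpr (mul_pos (by linarith) hY)
        have hσ1 := hSb t (xb1 δ t) ht.1.le
        have hσ2 := hSb t (xb2 δ t) ht.1.le
        rw [abs_le] at hσ1 hσ2
        nlinarith [hδ.1, hδ.2, hγ, hσ1.2, hσ2.2]
    intro t ht
    have h0m' : (0:ℝ) ∈ Ico (0:ℝ) (Tcδ δ) := ⟨le_rfl, hTc⟩
    have hmono : xb2 δ t - xb1 δ t - γ * (2*Sb+2) * t
        ≤ xb2 δ 0 - xb1 δ 0 - γ * (2*Sb+2) * 0 := anti h0m' ht ht.1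
    rw [h10, h20] at hmono
    have htT : t ≤ T := le_trans ht.2.le (hT δ hδ)
    have hKt : γ * (2*Sb+2) * t ≤ γ * (2*Sb+2) * T :=
      mul_le_mul_of_nonneg_left htT (by positivity)
    have hδ1 : δ ≤ 1 := hδ.2
    rw [hBdef]; linarith
  -- Step 2 : Lipschitz bound for g = θ^(2s+1) on [0, Tc)
  set g : ℝ → ℝ := fun t => (xb2 δ t - xb1 δ t) ^ (2*s+1) with hg
  set q : ℝ → ℝ := fun t => γ * (-(1/(2*s*(xb2 δ t - xb1 δ t) ^ (2*s))) + σ t (xb2 δ t) + δ)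
      - γ * (1/(2*s*(xb2 δ t - xb1 δ t) ^ (2*s)) - σ t (xb1 δ t) - δ) with hq
  have hgderiv : ∀ t ∈ Ioo (0:ℝ) (Tcδ δ),
      HasDerivAt g (q t * (2*s+1) * (xb2 δ t - xb1 δ t) ^ (2*s)) t := by
    intro t ht
    obtain ⟨hd1, hd2⟩ := hode t ht
    have h := (hd2.sub hd1).rpow_const (p := 2*s+1)
      (Or.inl (hθpos t ⟨ht.1.le, ht.2⟩).ne')
    rw [show (2*s+1-1) = 2*s by ring] at h
    exact h
  have hqbound : ∀ t ∈ Ioo (0:ℝ) (Tcδ δ),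
      |q t * (2*s+1) * (xb2 δ t - xb1 δ t) ^ (2*s)| ≤ L := by
    intro t ht
    have ht' : t ∈ Ico (0:ℝ) (Tcδ δ) := ⟨ht.1.le, ht.2⟩
    have hθt : 0 < xb2 δ t - xb1 δ t := hθpos t ht'
    have hY : 0 < (xb2 δ t - xb1 δ t) ^ (2*s) := Real.rpow_pos_of_pos hθt _
    have hYB : (xb2 δ t - xb1 δ t) ^ (2*s) ≤ B ^ (2*s) :=
      Real.rpow_le_rpow hθt.le (hbound t ht') (by linarith)
    have hσ1 := hSb t (xb1 δ t) ht.1.le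
    have hσ2 := hSb t (xb2 δ t) ht.1.le
    rw [abs_le] at hσ1 hσ2
    have hs2 : (2*s) ≠ 0 := by positivity
    have key : q t * (2*s+1) * (xb2 δ t - xb1 δ t) ^ (2*s)
        = (2*s+1)*γ*((σ t (xb2 δ t) + σ t (xb1 δ t) + 2*δ)
            * ((xb2 δ t - xb1 δ t) ^ (2*s))) - (2*s+1)*γ*(1/s) := by
      rw [hq]
      field_simp
      ring
    have hco : 0 ≤ (2*s+1)*γ := by positivity
    have hprod1 : (σ t (xb2 δ t) + σ t (xb1 δ t) + 2*δ) * ((xb2 δ t - xb1 δ t) ^ (2*s))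
        ≤ (2*Sb+2) * (B ^ (2*s)) := by
      have e1 := mul_le_mul_of_nonneg_right
        (show σ t (xb2 δ t) + σ t (xb1 δ t) + 2*δ ≤ 2*Sb+2 by
          have := hδ.2; linarith) hY.le
      have e2 := mul_le_mul_of_nonneg_left hYB (show (0:ℝ) ≤ 2*Sb+2 by linarith)
      linarith
    have hprod2 : -((2*Sb+2) * (B ^ (2*s)))
        ≤ (σ t (xb2 δ t) + σ t (xb1 δ t) + 2*δ) * ((xb2 δ t - xb1 δ t) ^ (2*s)) := by
      have e1 := mul_le_mul_of_nonneg_right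
        (show -(2*Sb+2) ≤ σ t (xb2 δ t) + σ t (xb1 δ t) + 2*δ by
          have := hδ.1; linarith) hY.le
      have e2 := mul_le_mul_of_nonneg_left hYB (show (0:ℝ) ≤ 2*Sb+2 by linarith)
      have e3 : (-(2*Sb+2)) * ((xb2 δ t - xb1 δ t) ^ (2*s))
          = -((2*Sb+2) * ((xb2 δ t - xb1 δ t) ^ (2*s))) := by ring
      linarith
    have m1 := mul_le_mul_of_nonneg_left hprod1 hco
    have m2 := mul_le_mul_of_nonneg_left hprod2 hco
    have hγs : 0 < (2*s+1)*γ*(1/s) := by positivity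
    have hLexp : L = (2*s+1)*γ*((2*Sb+2)*(B ^ (2*s))) + (2*s+1)*γ*(1/s) := by
      rw [hLdef]; ring
    rw [abs_le, key]
    constructor <;> linarith
  have hgcont : ContinuousOn g (Ico (0:ℝ) (Tcδ δ)) := by
    apply ContinuousOn.rpow_const (hc2.sub hc1)
    intro t ht
    exact Or.inr (by linarith)
  have mono : MonotoneOn (fun t => g t + L * t) (Ico (0:ℝ) (Tcδ δ)) := by
    apply monotoneOn_of_hasDerivWithinAt_nonneg (convex_Ico _ _)
      (f' := fun t => q t * (2*s+1) * (xb2 δ t - xb1 δ t) ^ (2*s) + L)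
    · exact hgcont.add (Continuous.continuousOn (by continuity))
    · intro t ht
      rw [interior_Ico] at ht
      exact ((hgderiv t ht).add
        (by simpa using (hasDerivAt_id t).const_mul L)).hasDerivWithinAt
    · intro t ht
      rw [interior_Ico] at ht
      have h := abs_le.1 (hqbound t ht)
      linarith [h.1]
  have anti : AntitoneOn (fun t => g t - L * t) (Ico (0:ℝ) (Tcδ δ)) := by
    apply antitoneOn_of_hasDerivWithinAt_nonpos (convex_Ico _ _)
      (f' := fun t => q t * (2*s+1) * (xb2 δ t - xb1 δ t) ^ (2*s) - L)
    · exact hgcont.sub (Continuous.continuousOn (by continuity))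
    · intro t ht
      rw [interior_Ico] at ht
      exact ((hgderiv t ht).sub
        (by simpa using (hasDerivAt_id t).const_mul L)).hasDerivWithinAt
    · intro t ht
      rw [interior_Ico] at ht
      have h := abs_le.1 (hqbound t ht)
      linarith [h.2]
  have lipIco : ∀ t ∈ Ico (0:ℝ) (Tcδ δ), ∀ t' ∈ Ico (0:ℝ) (Tcδ δ), t ≤ t' →
      |g t - g t'| ≤ L * (t' - t) := by
    intro t ht t' ht' htt
    have h1 : g t + L * t ≤ g t' + L * t' := mono ht ht' htt
    have h2 : g t' - L * t' ≤ g t - L * t := anti ht ht' htt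
    rw [abs_le]
    constructor <;> nlinarith
  -- Step 3 : endpoint estimate
  have hglim : Tendsto g (nhdsWithin (Tcδ δ) (Iio (Tcδ δ))) (nhds 0) := by
    have hcont : ContinuousAt (fun y : ℝ => y ^ (2*s+1)) 0 :=
      Real.continuousAt_rpow_const 0 (2*s+1) (Or.inr (by linarith))
    have h := hcont.tendsto.comp hlim
    rw [Real.zero_rpow (by positivity : (2*s+1) ≠ 0)] at h
    exact h
  have hend : ∀ t ∈ Ico (0:ℝ) (Tcδ δ), g t ≤ L * (Tcδ δ - t) := by
    intro t ht
    have hev : ∀ᶠ b in nhdsWithin (Tcδ δ) (Iio (Tcδ δ)), g t - g b ≤ L * (Tcδ δ - t) := by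
      filter_upwards [eventually_mem_nhdsWithin,
        (eventually_gt_nhds ht.2).filter_mono nhdsWithin_le_nhds] with b hb1 hb2
      have hbI : b ∈ Ico (0:ℝ) (Tcδ δ) := ⟨le_trans ht.1 hb2.le, hb1⟩
      have hl := abs_le.1 (lipIco t ht b hbI hb2.le)
      have hbc : b < Tcδ δ := hb1
      have : L * (b - t) ≤ L * (Tcδ δ - t) :=
        mul_le_mul_of_nonneg_left (by linarith) hL0.le
      linarith [hl.2]
    have htend : Tendsto (fun b => g t - g b) (nhdsWithin (Tcδ δ) (Iio (Tcδ δ)))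
        (nhds (g t - 0)) := tendsto_const_nhds.sub hglim
    have := le_of_tendsto htend hev
    simpa using this
  -- Step 4 : master Lipschitz estimate for θb^(2s+1) on the closed interval
  have master : ∀ t ∈ Icc (0:ℝ) (Tcδ δ), ∀ t' ∈ Icc (0:ℝ) (Tcδ δ), t ≤ t' →
      |(θb δ t) ^ (2*s+1) - (θb δ t') ^ (2*s+1)| ≤ L * (t' - t) := by
    intro t ht t' ht' htt
    rcases lt_or_eq_of_le ht'.2 with h2 | h2
    · have h1 : t < Tcδ δ := lt_of_le_of_lt htt h2
      rw [hθb, hθb, if_pos h1, if_pos h2]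
      exact lipIco t ⟨ht.1, h1⟩ t' ⟨ht'.1, h2⟩ htt
    · rcases lt_or_eq_of_le ht.2 with h1 | h1
      · rw [hθb, hθb, if_pos h1, h2, if_neg (lt_irrefl _),
          Real.zero_rpow (by positivity : (2*s+1) ≠ 0), sub_zero,
          abs_of_nonneg (Real.rpow_nonneg (hθpos t ⟨ht.1, h1⟩).le _)]
        exact hend t ⟨ht.1, h1⟩
      · rw [hθb, hθb, h1, h2]
        simp
  -- Step 5 : conclusion
  intro t ht t' ht'
  have hnn : ∀ τ, τ ∈ Icc (0:ℝ) (Tcδ δ) → 0 ≤ θb δ τ := by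
    intro τ hτ
    rw [hθb]
    split_ifs with h
    · exact (hθpos τ ⟨hτ.1, h⟩).le
    · exact le_rfl
  have hm : |(θb δ t) ^ (2*s+1) - (θb δ t') ^ (2*s+1)| ≤ L * |t - t'| := by
    rcases le_total t t' with h | h
    · have hmm := master t ht t' ht' h
      rw [abs_sub_comm t t', abs_of_nonneg (sub_nonneg.2 h)]
      exact hmm
    · have hmm := master t' ht' t ht h
      rw [abs_sub_comm] at hmm
      rw [abs_of_nonneg (sub_nonneg.2 h)]
      exact hmm
  exact holder_from_lip hp1 hL0 (hnn t ht) (hnn t' ht') (abs_nonneg _) hm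
end

section
/- Assume that T := sup_{δ ∈ [0,1]} T_c^δ < +∞ (the case δ = 0 being the unperturbed system), and for each δ ∈ [0,1] set θ̄_i := x̄_{i+1} − x̄_i (i = 1,2) on [0,T_c^δ], extended so that min{θ̄₁, θ̄₂}(T_c^δ) = 0. Then there exists C > 0, depending only on s, γ, ‖σ‖_∞, the initial gaps x₂⁰ − x₁⁰ and x₃⁰ − x₂⁰, and T, but not on δ, such that for every δ ∈ [0,1] and all t, t' ∈ [0,T_c^δ]: |min{θ̄₁, θ̄₂}(t) − min{θ̄₁, θ̄₂}(t')| ≤ C |t − t'|^{1/(2s+1)}. -/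
open Real Filter Set MeasureTheory

/-!
Write `q(d) = 1/(2s d^{2s})` for the repulsion of two particles at distance `d`, so that the gap
`θ₁ = x̄₂ - x̄₁` satisfies `θ̇₁ = γ(-2q(θ₁) + q(θ₂) + q(θ₁ + θ₂) + O(1))`, and symmetrically for `θ₂`.
While `θ₁` is the smaller gap, `q(θ₂), q(θ₁ + θ₂) ≤ q(θ₁)`, so `θ₁^{2s} |θ̇₁| ≤ γ(1/s + O(θ₁^{2s}))`:
the derivative of `θ₁^{2s+1}` is bounded as long as the gaps are. They are, uniformly in `δ`,
because the outer pair repels less than the inner ones, so `x̄₃ - x̄₁` grows at rate at most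
`2γ‖σ‖_∞`. The minimum of two functions inherits a two-sided bound on its Dini derivatives from
whichever of them is the smaller one, hence `min(θ₁, θ₂)^{2s+1}` is Lipschitz on `[0, T_c^δ]`
(up to the collision time by continuity), and `|a - b|^p ≤ |a^p - b^p|` for `p ≥ 1` turns this
into Hölder continuity of exponent `1/(2s+1)`.
-/

open Topology

lemma continuousOn_Icc_of_continuousOn_Ico {α β : Type*} [LinearOrder α] [TopologicalSpace α]
    [OrderTopology α] [TopologicalSpace β] {f : α → β} {a b : α} (hf : ContinuousOn f (Ico a b))
    (hb : Tendsto f (𝓝[<] b) (𝓝 (f b))) : ContinuousOn f (Icc a b) := by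
  intro x hx
  rcases hx.2.eq_or_lt with rfl | hxb
  · exact (continuousWithinAt_Iio_iff_Iic.1 hb).mono Icc_subset_Iic_self
  · refine (hf x ⟨hx.1, hxb⟩).mono_of_mem_nhdsWithin ?_
    exact mem_of_superset (inter_mem_nhdsWithin _ (Iio_mem_nhds hxb)) fun y hy => ⟨hy.1.1, hy.2⟩

lemma slope_eventuallyEq_of_eventuallyEq {f g : ℝ → ℝ} {x : ℝ} (h : f =ᶠ[𝓝 x] g) :
    slope f x =ᶠ[𝓝 x] slope g x := by
  filter_upwards [h] with z hz
  rw [slope_def_field, slope_def_field, hz, h.eq_of_nhds]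

lemma slope_min_of_eq {F G : ℝ → ℝ} {x z : ℝ} (hx : F x = G x) (hz : x < z) :
    slope (fun t => min (F t) (G t)) x z = min (slope F x z) (slope G x z) := by
  simp only [slope_def_field, ← hx, min_self]
  rw [← min_sub_sub_right, min_div_div_right (sub_pos.2 hz).le]

lemma eventually_abs_slope_min_lt_of_le {F G : ℝ → ℝ} {x d e r : ℝ} (hF : HasDerivAt F d x)
    (hG : HasDerivAt G e x) (hFG : F x ≤ G x) (hd : |d| < r) (he : G x ≤ F x → |e| < r) :
    ∀ᶠ z in 𝓝[>] x, |slope (fun t => min (F t) (G t)) x z| < r := by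
  have hFr : ∀ᶠ z in 𝓝[>] x, |slope F x z| < r :=
    ((continuous_abs.tendsto d).comp (hF.tendsto_slope.mono_left (nhdsGT_le_nhdsNE x))).eventually
      (gt_mem_nhds hd)
  rcases hFG.lt_or_eq with hlt | heq
  · have hmin : (fun t => min (F t) (G t)) =ᶠ[𝓝 x] F := by
      filter_upwards [hF.continuousAt.eventually_lt hG.continuousAt hlt] with z hz
      exact min_eq_left hz.le
    filter_upwards [hFr, nhdsWithin_le_nhds (slope_eventuallyEq_of_eventuallyEq hmin)]
      with z hz hzF
    rwa [hzF]
  · have hGr : ∀ᶠ z in 𝓝[>] x, |slope G x z| < r :=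
      ((continuous_abs.tendsto e).comp (hG.tendsto_slope.mono_left (nhdsGT_le_nhdsNE x))).eventually
        (gt_mem_nhds (he heq.ge))
    filter_upwards [hFr, hGr, self_mem_nhdsWithin] with z hzF hzG hz
    rw [slope_min_of_eq heq hz, abs_lt]
    rw [abs_lt] at hzF hzG
    exact ⟨lt_min hzF.1 hzG.1, (min_le_left _ _).trans_lt hzF.2⟩

lemma eventually_abs_slope_min_lt {F G : ℝ → ℝ} {x d e r : ℝ} (hF : HasDerivAt F d x)
    (hG : HasDerivAt G e x) (hd : F x ≤ G x → |d| < r) (he : G x ≤ F x → |e| < r) :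
    ∀ᶠ z in 𝓝[>] x, |slope (fun t => min (F t) (G t)) x z| < r := by
  rcases le_total (F x) (G x) with hFG | hGF
  · exact eventually_abs_slope_min_lt_of_le hF hG hFG (hd hFG) he
  · simp only [min_comm (F _)]
    exact eventually_abs_slope_min_lt_of_le hG hF hGF (he hGF) hd

theorem sub_le_mul_sub_of_frequently_slope_lt {f : ℝ → ℝ} {a b L : ℝ} (hab : a ≤ b)
    (hf : ContinuousOn f (Icc a b))
    (hslope : ∀ x ∈ Ioo a b, ∀ r, L < r → ∃ᶠ z in 𝓝[>] x, slope f x z < r) :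
    f b - f a ≤ L * (b - a) := by
  rcases hab.eq_or_lt with rfl | hab
  · simp
  -- the slope bound is only available inside `(a, b)`: compare on `[c, b]` and let `c → a`
  have hinner : ∀ c ∈ Ioo a b, f b - f c ≤ L * (b - c) := by
    intro c hc
    have hline : ∀ x, HasDerivWithinAt (fun t => f c + L * (t - c)) L (Ici x) x := fun x => by
      simpa using (((hasDerivAt_id x).sub_const c).const_mul L).const_add (f c) |>.hasDerivWithinAt
    have := image_le_of_liminf_slope_right_le_deriv_boundary
      (hf.mono (Icc_subset_Icc_left hc.1.le)) (le_of_eq (by ring)) (by fun_prop)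
      (fun x _ => hline x)
      (fun x hx r hr => hslope x ⟨hc.1.trans_le hx.1, hx.2⟩ r hr) (right_mem_Icc.2 hc.2.le)
    linarith
  have ha : a ∈ closure (Ioo a b) := by
    rw [closure_Ioo hab.ne]
    exact left_mem_Icc.2 hab.le
  have hfa : ContinuousWithinAt f (Ioo a b) a :=
    (hf a (left_mem_Icc.2 hab.le)).mono Ioo_subset_Icc_self
  exact ContinuousWithinAt.closure_le ha (continuousWithinAt_const.sub hfa) (by fun_prop) hinner

theorem abs_sub_le_mul_sub_of_eventually_abs_slope_lt {f : ℝ → ℝ} {a b L : ℝ} (hab : a ≤ b)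
    (hf : ContinuousOn f (Icc a b))
    (hslope : ∀ x ∈ Ioo a b, ∀ r, L < r → ∀ᶠ z in 𝓝[>] x, |slope f x z| < r) :
    |f b - f a| ≤ L * (b - a) := by
  have hup := sub_le_mul_sub_of_frequently_slope_lt hab hf fun x hx r hr =>
    ((hslope x hx r hr).mono fun z hz => (le_abs_self _).trans_lt hz).frequently
  have hdown := sub_le_mul_sub_of_frequently_slope_lt (f := fun t => -f t) hab hf.neg
    fun x hx r hr => ((hslope x hx r hr).mono fun z hz => by
      rw [slope_neg]
      exact (neg_le_abs _).trans_lt hz).frequently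
  rw [abs_le]
  constructor <;> linarith

lemma abs_sub_rpow_le_abs_rpow_sub {x y p : ℝ} (hx : 0 ≤ x) (hy : 0 ≤ y) (hp : 1 ≤ p) :
    |x - y| ^ p ≤ |x ^ p - y ^ p| := by
  wlog hyx : y ≤ x generalizing x y
  · rw [abs_sub_comm, abs_sub_comm (x ^ p)]
    exact this hy hx (le_of_not_ge hyx)
  have := Real.add_rpow_le_rpow_add (sub_nonneg.2 hyx) hy hp
  rw [sub_add_cancel] at this
  rw [abs_of_nonneg (sub_nonneg.2 hyx),
    abs_of_nonneg (sub_nonneg.2 (Real.rpow_le_rpow hy hyx (by linarith)))]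
  linarith

lemma abs_sub_le_of_abs_rpow_sub_le {x y p L d : ℝ} (hx : 0 ≤ x) (hy : 0 ≤ y) (hp : 1 ≤ p)
    (hL : 0 ≤ L) (hd : 0 ≤ d) (h : |x ^ p - y ^ p| ≤ L * d) :
    |x - y| ≤ L ^ (1 / p) * d ^ (1 / p) := by
  have hp0 : 0 < p := by linarith
  rw [← Real.mul_rpow hL hd, ← Real.rpow_le_rpow_iff (abs_nonneg _) (by positivity) hp0,
    ← Real.rpow_mul (by positivity), one_div_mul_cancel hp0.ne', Real.rpow_one]
  exact (abs_sub_rpow_le_abs_rpow_sub hx hy hp).trans h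

noncomputable def repulsion (s d : ℝ) : ℝ := 1 / (2 * s * d ^ (2 * s))

lemma repulsion_nonneg {s d : ℝ} (hs : 0 ≤ s) (hd : 0 ≤ d) : 0 ≤ repulsion s d := by
  have := Real.rpow_nonneg hd (2 * s)
  unfold repulsion
  positivity

lemma repulsion_anti {s d e : ℝ} (hs : 0 < s) (hd : 0 < d) (hde : d ≤ e) :
    repulsion s e ≤ repulsion s d := by
  unfold repulsion
  gcongr

lemma rpow_mul_repulsion {s d : ℝ} (hs : 0 < s) (hd : 0 < d) :
    d ^ (2 * s) * repulsion s d = 1 / (2 * s) := by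
  have := (Real.rpow_pos_of_pos hd (2 * s)).ne'
  unfold repulsion
  field_simp

lemma div_abs_rpow_eq_repulsion {s d : ℝ} (hd : 0 < d) :
    d / (2 * s * |d| ^ (1 + 2 * s)) = repulsion s d := by
  have := (Real.rpow_pos_of_pos hd (2 * s)).ne'
  rw [abs_of_pos hd, Real.rpow_add hd, Real.rpow_one, repulsion]
  field_simp

lemma neg_div_abs_rpow_eq_repulsion {s d : ℝ} (hd : 0 < d) :
    -d / (2 * s * |-d| ^ (1 + 2 * s)) = -repulsion s d := by
  rw [abs_neg, neg_div, div_abs_rpow_eq_repulsion hd]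

lemma abs_rpow_mul_velocity_le {s a b c w K : ℝ} (hs : 0 < s) (ha : 0 < a) (hab : a ≤ b)
    (hac : a ≤ c) (hw : |w| ≤ K) :
    |a ^ (2 * s) * (-2 * repulsion s a + repulsion s b + repulsion s c + w)|
      ≤ 1 / s + K * a ^ (2 * s) := by
  have hpos := Real.rpow_pos_of_pos ha (2 * s)
  have haa := rpow_mul_repulsion hs ha
  have hb := mul_le_mul_of_nonneg_left (repulsion_anti hs ha hab) hpos.le
  have hc := mul_le_mul_of_nonneg_left (repulsion_anti hs ha hac) hpos.le
  have hb0 := mul_nonneg hpos.le (repulsion_nonneg hs.le (ha.le.trans hab))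
  have hc0 := mul_nonneg hpos.le (repulsion_nonneg hs.le (ha.le.trans hac))
  have hw' : |a ^ (2 * s) * w| ≤ K * a ^ (2 * s) := by
    rw [abs_mul, abs_of_pos hpos, mul_comm]
    exact mul_le_mul_of_nonneg_right hw hpos.le
  have hs' : 1 / s = 2 * (1 / (2 * s)) := by field_simp
  rw [abs_le] at hw' ⊢
  constructor <;> nlinarith

lemma abs_deriv_rpow_gap_le {s γ a b c w K M : ℝ} (hs : 0 < s) (hγ : 0 ≤ γ) (ha : 0 < a)
    (hab : a ≤ b) (hac : a ≤ c) (hcM : c ≤ M) (hK : 0 ≤ K) (hw : |w| ≤ K) :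
    |γ * (-2 * repulsion s a + repulsion s b + repulsion s c + w) * (2 * s + 1)
        * a ^ (2 * s + 1 - 1)| ≤ (2 * s + 1) * γ * (1 / s + K * M ^ (2 * s)) := by
  have haM : a ^ (2 * s) ≤ M ^ (2 * s) :=
    Real.rpow_le_rpow ha.le (hac.trans hcM) (by positivity)
  have hbound := abs_rpow_mul_velocity_le hs ha hab hac hw
  rw [add_sub_cancel_right, show ∀ x : ℝ, γ * x * (2 * s + 1) * a ^ (2 * s)
      = (2 * s + 1) * γ * (a ^ (2 * s) * x) from fun x => by ring, abs_mul,
    abs_of_nonneg (by positivity)]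
  gcongr
  exact hbound.trans (by gcongr)

namespace ThreePartPert

variable {s γ δ Tc t : ℝ} {σ : ℝ → ℝ → ℝ} {X0 : Fin 3 → ℝ} {X : Fin 3 → ℝ → ℝ}

def minGap (X : Fin 3 → ℝ → ℝ) (t : ℝ) : ℝ := min (X 1 t - X 0 t) (X 2 t - X 1 t)

lemma gaps_pos (h : ThreePartPert s γ δ σ X0 Tc X) (ht : t ∈ Ico 0 Tc) :
    0 < X 1 t - X 0 t ∧ 0 < X 2 t - X 1 t := by
  obtain ⟨h01, h12⟩ := h.2.2.2.1 t ht
  exact ⟨sub_pos.2 h01, sub_pos.2 h12⟩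

lemma minGap_pos (h : ThreePartPert s γ δ σ X0 Tc X) (ht : t ∈ Ico 0 Tc) : 0 < minGap X t :=
  lt_min (h.gaps_pos ht).1 (h.gaps_pos ht).2

lemma nonneg_of_eq_ite_minGap (h : ThreePartPert s γ δ σ X0 Tc X) {θ : ℝ → ℝ}
    (hθ : ∀ t, θ t = if t < Tc then minGap X t else 0) (ht : 0 ≤ t) : 0 ≤ θ t := by
  rw [hθ]
  split_ifs with htT
  · exact (h.minGap_pos ⟨ht, htT⟩).le
  · exact le_rfl

lemma hasDerivAt_particles (h : ThreePartPert s γ δ σ X0 Tc X) (ht : t ∈ Ioo 0 Tc) :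
    HasDerivAt (X 0) (γ * (repulsion s (X 1 t - X 0 t) - repulsion s (X 2 t - X 0 t)
        - σ t (X 0 t) - δ)) t ∧
    HasDerivAt (X 1) (γ * (repulsion s (X 2 t - X 1 t) - repulsion s (X 1 t - X 0 t)
        + σ t (X 1 t) + δ)) t ∧
    HasDerivAt (X 2) (γ * (repulsion s (X 2 t - X 0 t) - repulsion s (X 2 t - X 1 t)
        - σ t (X 2 t) - δ)) t := by
  obtain ⟨ha, hb⟩ := h.gaps_pos ⟨ht.1.le, ht.2⟩
  have hc : 0 < X 2 t - X 0 t := by linarith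
  have e10 : X 0 t - X 1 t = -(X 1 t - X 0 t) := (neg_sub _ _).symm
  have e20 : X 0 t - X 2 t = -(X 2 t - X 0 t) := (neg_sub _ _).symm
  have e21 : X 1 t - X 2 t = -(X 2 t - X 1 t) := (neg_sub _ _).symm
  refine ⟨(h.2.2.1 0 t ht).congr_deriv ?_, (h.2.2.1 1 t ht).congr_deriv ?_,
    (h.2.2.1 2 t ht).congr_deriv ?_⟩ <;>
  simp only [Finset.sum_erase_eq_sub (Finset.mem_univ _), Fin.sum_univ_three, sub_self, zero_div,
    mul_zero, mul_div_assoc, e10, e20, e21, div_abs_rpow_eq_repulsion ha,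
    div_abs_rpow_eq_repulsion hb, div_abs_rpow_eq_repulsion hc, neg_div_abs_rpow_eq_repulsion ha,
    neg_div_abs_rpow_eq_repulsion hb, neg_div_abs_rpow_eq_repulsion hc,
    show zeta 0 = 1 from rfl, show zeta 1 = -1 from rfl, show zeta 2 = 1 from rfl] <;> ring

lemma hasDerivAt_gap₀₁ (h : ThreePartPert s γ δ σ X0 Tc X) (ht : t ∈ Ioo 0 Tc) :
    HasDerivAt (fun t => X 1 t - X 0 t)
      (γ * (-2 * repulsion s (X 1 t - X 0 t) + repulsion s (X 2 t - X 1 t)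
        + repulsion s (X 2 t - X 0 t) + (σ t (X 1 t) + σ t (X 0 t) + 2 * δ))) t := by
  obtain ⟨h0, h1, -⟩ := h.hasDerivAt_particles ht
  exact (h1.sub h0).congr_deriv (by ring)

lemma hasDerivAt_gap₁₂ (h : ThreePartPert s γ δ σ X0 Tc X) (ht : t ∈ Ioo 0 Tc) :
    HasDerivAt (fun t => X 2 t - X 1 t)
      (γ * (-2 * repulsion s (X 2 t - X 1 t) + repulsion s (X 1 t - X 0 t)
        + repulsion s (X 2 t - X 0 t) + -(σ t (X 2 t) + σ t (X 1 t) + 2 * δ))) t := by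
  obtain ⟨-, h1, h2⟩ := h.hasDerivAt_particles ht
  exact (h2.sub h1).congr_deriv (by ring)

lemma hasDerivAt_gap₀₂ (h : ThreePartPert s γ δ σ X0 Tc X) (ht : t ∈ Ioo 0 Tc) :
    HasDerivAt (fun t => X 2 t - X 0 t)
      (γ * (2 * repulsion s (X 2 t - X 0 t) - repulsion s (X 1 t - X 0 t)
        - repulsion s (X 2 t - X 1 t) - σ t (X 2 t) + σ t (X 0 t))) t := by
  obtain ⟨h0, -, h2⟩ := h.hasDerivAt_particles ht
  exact (h2.sub h0).congr_deriv (by ring)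

variable {B M : ℝ}

lemma gap₀₂_le (h : ThreePartPert s γ δ σ X0 Tc X) (hs : 0 < s) (hγ : 0 ≤ γ)
    (hσ : ∀ t x, 0 ≤ t → |σ t x| ≤ B) (ht : t ∈ Ico 0 Tc) :
    X 2 t - X 0 t ≤ X0 2 - X0 0 + 2 * γ * B * t := by
  have hgap := fun x (hx : x ∈ Ioo 0 Tc) => h.hasDerivAt_gap₀₂ hx
  have hderiv : ∀ x ∈ interior (Ico 0 Tc), deriv (fun t => X 2 t - X 0 t) x ≤ 2 * γ * B := by
    rw [interior_Ico (a := (0 : ℝ))]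
    intro x hx
    obtain ⟨ha, hb⟩ := h.gaps_pos ⟨hx.1.le, hx.2⟩
    rw [(hgap x hx).deriv]
    -- the outer pair repels less than either inner pair
    have hqa := repulsion_anti hs ha (show X 1 x - X 0 x ≤ X 2 x - X 0 x by linarith)
    have hqb := repulsion_anti hs hb (show X 2 x - X 1 x ≤ X 2 x - X 0 x by linarith)
    have h0 := abs_le.1 (hσ x (X 0 x) hx.1.le)
    have h2 := abs_le.1 (hσ x (X 2 x) hx.1.le)
    have : 2 * repulsion s (X 2 x - X 0 x) - repulsion s (X 1 x - X 0 x)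
        - repulsion s (X 2 x - X 1 x) - σ x (X 2 x) + σ x (X 0 x) ≤ 2 * B := by linarith
    linarith [mul_le_mul_of_nonneg_left this hγ]
  obtain ⟨hinit, hcont, -, -, -⟩ := h
  have hdiff : DifferentiableOn ℝ (fun t => X 2 t - X 0 t) (interior (Ico 0 Tc)) := fun x hx =>
    (hgap x (by rwa [interior_Ico] at hx)).differentiableAt.differentiableWithinAt
  have := (convex_Ico 0 Tc).image_sub_le_mul_sub_of_deriv_le
    (f := fun t => X 2 t - X 0 t) ((hcont 2).sub (hcont 0)) hdiff
    hderiv 0 ⟨le_rfl, ht.1.trans_lt ht.2⟩ t ht ht.1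
  rw [hinit 2, hinit 0, show zeta 0 = zeta 2 from rfl] at this
  linarith

lemma eventually_abs_slope_minGap_rpow_lt (h : ThreePartPert s γ δ σ X0 Tc X) (hs : 0 < s)
    (hγ : 0 ≤ γ) (hB : 0 ≤ B) (hσ : ∀ t x, 0 ≤ t → |σ t x| ≤ B) (hδ : |δ| ≤ 1)
    (hM : ∀ t ∈ Ico 0 Tc, X 2 t - X 0 t ≤ M) (ht : t ∈ Ioo 0 Tc) {r : ℝ}
    (hr : (2 * s + 1) * γ * (1 / s + (2 * B + 2) * M ^ (2 * s)) < r) :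
    ∀ᶠ z in 𝓝[>] t, |slope (fun t => minGap X t ^ (2 * s + 1)) t z| < r := by
  have hp : 0 < 2 * s + 1 := by positivity
  obtain ⟨ha, hb⟩ := h.gaps_pos ⟨ht.1.le, ht.2⟩
  have hF := (h.hasDerivAt_gap₀₁ ht).rpow_const (p := 2 * s + 1) (Or.inl ha.ne')
  have hG := (h.hasDerivAt_gap₁₂ ht).rpow_const (p := 2 * s + 1) (Or.inl hb.ne')
  have hMt := hM t ⟨ht.1.le, ht.2⟩
  have hw : ∀ x y, |σ t x + σ t y + 2 * δ| ≤ 2 * B + 2 := fun x y => by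
    have := abs_add_three (σ t x) (σ t y) (2 * δ)
    rw [abs_mul, abs_two] at this
    linarith [hσ t x ht.1.le, hσ t y ht.1.le]
  have hmin : (fun t => minGap X t ^ (2 * s + 1)) =ᶠ[𝓝 t]
      fun t => min ((X 1 t - X 0 t) ^ (2 * s + 1)) ((X 2 t - X 1 t) ^ (2 * s + 1)) := by
    filter_upwards [Ioo_mem_nhds ht.1 ht.2] with z hz
    obtain ⟨hza, hzb⟩ := h.gaps_pos ⟨hz.1.le, hz.2⟩
    exact (Real.monotoneOn_rpow_Ici_of_exponent_nonneg hp.le).map_min hza.le hzb.le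
  refine (eventually_nhdsWithin_of_eventually_nhds (slope_eventuallyEq_of_eventuallyEq hmin)).mp
    ((eventually_abs_slope_min_lt hF hG ?_ ?_).mono fun z hz hzmin => hzmin ▸ hz)
  · intro hab
    rw [Real.rpow_le_rpow_iff ha.le hb.le hp] at hab
    exact (abs_deriv_rpow_gap_le hs hγ ha hab (by linarith) hMt (by positivity)
      (hw _ _)).trans_lt hr
  · intro hba
    rw [Real.rpow_le_rpow_iff hb.le ha.le hp] at hba
    exact (abs_deriv_rpow_gap_le hs hγ hb hba (by linarith) hMt (by positivity)
      ((abs_neg _).trans_le (hw _ _))).trans_lt hr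

lemma abs_rpow_sub_rpow_le (h : ThreePartPert s γ δ σ X0 Tc X) (hs : 0 < s) (hγ : 0 ≤ γ)
    (hB : 0 ≤ B) (hσ : ∀ t x, 0 ≤ t → |σ t x| ≤ B) (hδ : |δ| ≤ 1)
    (hM : ∀ t ∈ Ico 0 Tc, X 2 t - X 0 t ≤ M) {θ : ℝ → ℝ}
    (hθ : ∀ t, θ t = if t < Tc then minGap X t else 0) {u v : ℝ} (hu : 0 ≤ u) (huv : u ≤ v)
    (hv : v ≤ Tc) :
    |θ v ^ (2 * s + 1) - θ u ^ (2 * s + 1)|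
      ≤ (2 * s + 1) * γ * (1 / s + (2 * B + 2) * M ^ (2 * s)) * (v - u) := by
  have hθc : ContinuousOn θ (Icc 0 Tc) := by
    obtain ⟨-, hcont, -, -, hcoll⟩ := h
    refine continuousOn_Icc_of_continuousOn_Ico ?_ ?_
    · exact (ContinuousOn.inf ((hcont 1).sub (hcont 0)) ((hcont 2).sub (hcont 1))).congr
        fun t ht => by rw [hθ, if_pos ht.2]; rfl
    · rw [hθ, if_neg (lt_irrefl _)]
      exact hcoll.congr'
        (eventually_nhdsWithin_of_forall fun t ht => ((hθ t).trans (if_pos ht)).symm)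
  refine abs_sub_le_mul_sub_of_eventually_abs_slope_lt huv
    ((hθc.rpow_const fun _ _ => Or.inr (by positivity)).mono (Icc_subset_Icc hu hv))
    fun x hx r hr => ?_
  have hx' : x ∈ Ioo 0 Tc := ⟨hu.trans_lt hx.1, hx.2.trans_le hv⟩
  have heq : (fun t => θ t ^ (2 * s + 1)) =ᶠ[𝓝 x] fun t => minGap X t ^ (2 * s + 1) := by
    filter_upwards [Iio_mem_nhds hx'.2] with t (ht : t < Tc)
    rw [hθ, if_pos ht]
  filter_upwards [eventually_nhdsWithin_of_eventually_nhds (slope_eventuallyEq_of_eventuallyEq heq),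
    h.eventually_abs_slope_minGap_rpow_lt hs hγ hB hσ hδ hM hx' hr] with z hz hlt
  rwa [hz]

end ThreePartPert

theorem statement_14
    (s γ : ℝ) (hs : s ∈ Ioo (0:ℝ) 1) (hγ : 0 < γ)
    (σ : ℝ → ℝ → ℝ) (hσ : SigmaOK s σ)
    (x10 x20 x30 : ℝ) (hx : x10 < x20 ∧ x20 < x30)
    (Xb : ℝ → Fin 3 → ℝ → ℝ) (Tcδ : ℝ → ℝ)
    (hpert : ∀ δ ∈ Icc (0:ℝ) 1,
      0 < Tcδ δ ∧ ThreePartPert s γ δ σ ![x10, x20, x30] (Tcδ δ) (Xb δ))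
    (T : ℝ) (hT : ∀ δ ∈ Icc (0:ℝ) 1, Tcδ δ ≤ T)
    (θm : ℝ → ℝ → ℝ)
    (hθm : ∀ δ t : ℝ, θm δ t =
      if t < Tcδ δ then min (Xb δ 1 t - Xb δ 0 t) (Xb δ 2 t - Xb δ 1 t) else 0) :
    ∃ C > (0:ℝ), ∀ δ ∈ Icc (0:ℝ) 1, ∀ t ∈ Icc (0:ℝ) (Tcδ δ), ∀ t' ∈ Icc (0:ℝ) (Tcδ δ),
      |θm δ t - θm δ t'| ≤ C * |t - t'| ^ (1/(2*s+1)) := by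
  obtain ⟨hs, -⟩ := hs
  obtain ⟨B, hB⟩ := hσ.bounded
  have hB0 : 0 ≤ B := (abs_nonneg _).trans (hB 0 0 le_rfl)
  have hT0 : 0 ≤ T := (hpert 0 ⟨le_rfl, zero_le_one⟩).1.le.trans (hT 0 ⟨le_rfl, zero_le_one⟩)
  set M := x30 - x10 + 2 * γ * B * T
  have hM0 : 0 ≤ M := add_nonneg (sub_nonneg.2 (hx.1.trans hx.2).le) (by positivity)
  set L := (2 * s + 1) * γ * (1 / s + (2 * B + 2) * M ^ (2 * s))
  have hL : 0 < L := by positivity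
  refine ⟨L ^ (1 / (2 * s + 1)), by positivity, fun δ hδ t ht t' ht' => ?_⟩
  obtain ⟨-, h⟩ := hpert δ hδ
  have hgap : ∀ t ∈ Ico 0 (Tcδ δ), Xb δ 2 t - Xb δ 0 t ≤ M := fun t ht => by
    have hbound := h.gap₀₂_le hs hγ.le hB ht
    have htT : 2 * γ * B * t ≤ 2 * γ * B * T :=
      mul_le_mul_of_nonneg_left (ht.2.le.trans (hT δ hδ)) (by positivity)
    simp only [Matrix.cons_val_zero, Matrix.cons_val_two, Matrix.tail_cons, Matrix.head_cons]
      at hbound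
    linarith
  have hδ' : |δ| ≤ 1 := abs_le.2 ⟨by linarith [hδ.1], hδ.2⟩
  wlog htt' : t ≤ t' generalizing t t'
  · rw [abs_sub_comm, abs_sub_comm t]
    exact this t' ht' t ht (le_of_not_ge htt')
  rw [abs_sub_comm, abs_sub_comm t, abs_of_nonneg (sub_nonneg.2 htt')]
  exact abs_sub_le_of_abs_rpow_sub_le (h.nonneg_of_eq_ite_minGap (hθm δ) ht'.1)
    (h.nonneg_of_eq_ite_minGap (hθm δ) ht.1) (by linarith) hL.le (sub_nonneg.2 htt')
    (h.abs_rpow_sub_rpow_le hs hγ.le hB0 hB hδ' hgap (hθm δ) ht.1 htt' ht'.2)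
end

section
/- For every K > 1 there exist M > 2K + 3 and θ₀ > 0 such that for every θ ∈ (0,θ₀) and every δ̂ ∈ (0,1], the solution (x̂₁, x̂₂, x̂₃) of the three-particle hat system (with initial data x̂₁(0) = p₁ − θ, x̂₂(0) = p₂ + Kθ, x̂₃(0) = p₃ − θ, where p₂ − p₁ = θ and p₃ − p₂ ≥ Mθ) satisfies, with θ̂_i := x̂_{i+1} − x̂_i (i = 1,2): θ̂₁(t) ≤ θ̂₂(t) for every t > 0 in the maximal interval of existence, and θ̂₁ is nonincreasing on that interval. -/
open Real Filter Set MeasureTheory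

/-!
Write `a = x̂₂ - x̂₁`, `b = x̂₃ - x̂₂` and `F r = 1 / (2 s r ^ (2s))`, so that
`ȧ = γ (F b + F (a + b) - 2 F a + σ(x̂₁) + σ(x̂₂) + 2δ̂)` and
`(b - a)˙ = γ (3 (F a - F b) - σ(x̂₁) - 2σ(x̂₂) - σ(x̂₃) - 4δ̂)`.
As long as `a ≤ b`, we have `F b ≤ F a` and `F (a + b) ≤ F (2a)`; so, with `|σ| ≤ B` and
`E = 2B + 2`, the difference `b - a` decreases at rate at most `2γE`, while
`ȧ ≤ -γ (F a - F (2a)) + γE ≤ -γE` once `a` is below the threshold `D` where `F a - F (2a) ≥ 2E`.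
Hence `a` decreases, the elapsed time is less than `a(0) / (γE)`, and `b - a > (b - a)(0) - 2a(0)`,
which is positive for the initial data of the theorem. A continuous induction on `a < D ∧ a < b`
closes the argument.
-/

open Topology

noncomputable def pairForce (s r : ℝ) : ℝ := 1 / (2 * s * r ^ (2 * s))

section pairForce

variable {s : ℝ}

lemma div_abs_rpow_eq_pairForce {x y : ℝ} (h : x < y) :
    (y - x) / (2 * s * |y - x| ^ (1 + 2 * s)) = pairForce s (y - x) := by
  have hyx : 0 < y - x := sub_pos.2 h
  rw [abs_of_pos hyx, Real.rpow_add hyx, Real.rpow_one, pairForce]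
  field_simp

lemma div_abs_rpow_eq_neg_pairForce {x y : ℝ} (h : x < y) :
    (x - y) / (2 * s * |x - y| ^ (1 + 2 * s)) = -pairForce s (y - x) := by
  rw [abs_sub_comm, ← neg_sub, neg_div, div_abs_rpow_eq_pairForce h]

lemma pairForce_le_pairForce (hs : 0 < s) {r r' : ℝ} (hr : 0 < r) (h : r ≤ r') :
    pairForce s r' ≤ pairForce s r :=
  one_div_le_one_div_of_le (by positivity) (by gcongr)

lemma pairForce_two_mul {r : ℝ} (hr : 0 ≤ r) :
    pairForce s (2 * r) = (2 : ℝ) ^ (-(2 * s)) * pairForce s r := by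
  rw [pairForce, pairForce, Real.mul_rpow zero_le_two hr, Real.rpow_neg zero_le_two]
  field_simp

lemma tendsto_pairForce_sub_pairForce_two_mul (hs : 0 < s) :
    Tendsto (fun r => pairForce s r - pairForce s (2 * r)) (𝓝[>] 0) atTop := by
  have hq : 0 < 1 - (2 : ℝ) ^ (-(2 * s)) :=
    sub_pos.2 (Real.rpow_lt_one_of_one_lt_of_neg one_lt_two (by linarith))
  have hF : Tendsto (pairForce s) (𝓝[>] 0) atTop := by
    have := (tendsto_rpow_neg_nhdsGT_zero (y := -(2 * s)) (by linarith)).const_mul_atTop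
      (inv_pos.2 (mul_pos two_pos hs))
    refine this.congr' (eventually_nhdsWithin_of_forall fun r (hr : 0 < r) => ?_)
    rw [pairForce, Real.rpow_neg hr.le]
    ring
  refine (hF.const_mul_atTop hq).congr' (eventually_nhdsWithin_of_forall fun r (hr : 0 < r) => ?_)
  simp only [pairForce_two_mul hr.le]
  ring

end pairForce

lemma image_sub_le_mul_sub_of_hasDerivAt_le {f f' : ℝ → ℝ} {a b C : ℝ}
    (hf : ContinuousOn f (Icc a b)) (hf' : ∀ t ∈ Ioo a b, HasDerivAt f (f' t) t)
    (hC : ∀ t ∈ Ioo a b, f' t ≤ C) {x y : ℝ} (hx : x ∈ Icc a b) (hy : y ∈ Icc a b) (hxy : x ≤ y) :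
    f y - f x ≤ C * (y - x) := by
  refine (convex_Icc a b).image_sub_le_mul_sub_of_deriv_le hf ?_ ?_ x hx y hy hxy <;>
    rw [interior_Icc]
  · exact fun t ht => (hf' t ht).differentiableAt.differentiableWithinAt
  · exact fun t ht => (hf' t ht).deriv ▸ hC t ht

lemma mul_sub_le_image_sub_of_le_hasDerivAt {f f' : ℝ → ℝ} {a b C : ℝ}
    (hf : ContinuousOn f (Icc a b)) (hf' : ∀ t ∈ Ioo a b, HasDerivAt f (f' t) t)
    (hC : ∀ t ∈ Ioo a b, C ≤ f' t) {x y : ℝ} (hx : x ∈ Icc a b) (hy : y ∈ Icc a b) (hxy : x ≤ y) :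
    C * (y - x) ≤ f y - f x := by
  refine (convex_Icc a b).mul_sub_le_image_sub_of_le_deriv hf ?_ ?_ x hx y hy hxy <;>
    rw [interior_Icc]
  · exact fun t ht => (hf' t ht).differentiableAt.differentiableWithinAt
  · exact fun t ht => (hf' t ht).deriv ▸ hC t ht

lemma ContinuousOn.forall_lt_zero_of_forall_Ico {g : ℝ → ℝ} {a b : ℝ}
    (hg : ContinuousOn g (Icc a b)) (hstep : ∀ c ∈ Icc a b, (∀ t ∈ Ico a c, g t < 0) → g c < 0) :
    ∀ t ∈ Icc a b, g t < 0 := by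
  by_contra! ⟨t, ht, hgt⟩
  have hS : IsCompact (Icc a b ∩ g ⁻¹' Ici 0) :=
    isCompact_Icc.of_isClosed_subset (hg.preimage_isClosed_of_isClosed isClosed_Icc isClosed_Ici)
      inter_subset_left
  obtain ⟨c, ⟨hc, hgc⟩, hmin⟩ := hS.exists_isLeast ⟨t, ht, hgt⟩
  refine (hstep c hc fun τ hτ => ?_).not_ge hgc
  by_contra! hgτ
  exact (hmin ⟨⟨hτ.1, hτ.2.le.trans hc.2⟩, hgτ⟩).not_gt hτ.2

section HatSys3

variable {s γ δ : ℝ} {σ : ℝ → ℝ → ℝ} {a : Fin 3 → ℝ} {T : ℝ} {X : Fin 3 → ℝ → ℝ}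

lemma HatSys3.hasDerivAt_particles (hX : HatSys3 s γ δ σ a T X) {t : ℝ} (ht : t ∈ Ioo 0 T) :
    HasDerivAt (X 0)
        (γ * (pairForce s (X 1 t - X 0 t) - pairForce s (X 2 t - X 0 t) - σ t (X 0 t) - δ)) t ∧
      HasDerivAt (X 1)
        (γ * (pairForce s (X 2 t - X 1 t) - pairForce s (X 1 t - X 0 t) + σ t (X 1 t) + δ)) t ∧
      HasDerivAt (X 2)
        (γ * (pairForce s (X 2 t - X 0 t) - pairForce s (X 2 t - X 1 t) - σ t (X 2 t) - δ)) t := by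
  obtain ⟨h01, h12⟩ := hX.2.2.2 t (Ioo_subset_Icc_self ht)
  have h02 := h01.trans h12
  refine ⟨?_, ?_, ?_⟩ <;> convert hX.2.2.1 _ t ht using 2 <;>
    simp only [Finset.sum_erase_eq_sub (Finset.mem_univ _), Fin.sum_univ_three, mul_div_assoc,
      sub_self, zero_div, mul_zero, div_abs_rpow_eq_pairForce h01, div_abs_rpow_eq_neg_pairForce h01,
      div_abs_rpow_eq_pairForce h12, div_abs_rpow_eq_neg_pairForce h12,
      div_abs_rpow_eq_pairForce h02, div_abs_rpow_eq_neg_pairForce h02] <;>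
    simp only [zeta, Matrix.cons_val_zero, Matrix.cons_val_one, Matrix.cons_val] <;> ring

lemma HatSys3.hasDerivAt_gap (hX : HatSys3 s γ δ σ a T X) {t : ℝ} (ht : t ∈ Ioo 0 T) :
    HasDerivAt (fun τ => X 1 τ - X 0 τ)
      (γ * (pairForce s (X 2 t - X 1 t) + pairForce s (X 2 t - X 0 t)
        - 2 * pairForce s (X 1 t - X 0 t) + σ t (X 0 t) + σ t (X 1 t) + 2 * δ)) t := by
  obtain ⟨h0, h1, -⟩ := hX.hasDerivAt_particles ht
  exact (h1.sub h0).congr_deriv (by ring)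

lemma HatSys3.hasDerivAt_gap_sub_gap (hX : HatSys3 s γ δ σ a T X) {t : ℝ} (ht : t ∈ Ioo 0 T) :
    HasDerivAt (fun τ => (X 2 τ - X 1 τ) - (X 1 τ - X 0 τ))
      (γ * (3 * (pairForce s (X 1 t - X 0 t) - pairForce s (X 2 t - X 1 t))
        - (σ t (X 0 t) + 2 * σ t (X 1 t) + σ t (X 2 t)) - 4 * δ)) t := by
  obtain ⟨h0, h1, h2⟩ := hX.hasDerivAt_particles ht
  exact ((h2.sub h1).sub (h1.sub h0)).congr_deriv (by ring)

variable {B : ℝ}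

lemma HatSys3.gap_sub_le (hX : HatSys3 s γ δ σ a T X) (hs : 0 < s) (hγ : 0 ≤ γ)
    (hσ : ∀ t x, 0 ≤ t → |σ t x| ≤ B) (hδ : δ ≤ 1) {D : ℝ}
    (hD : ∀ r ∈ Ioo 0 D, 2 * (2 * B + 2) ≤ pairForce s r - pairForce s (2 * r)) {c : ℝ} (hc : c ≤ T)
    (hgood : ∀ t ∈ Ioo 0 c, X 1 t - X 0 t < D ∧ X 1 t - X 0 t ≤ X 2 t - X 1 t)
    {x y : ℝ} (hx : x ∈ Icc 0 c) (hy : y ∈ Icc 0 c) (hxy : x ≤ y) :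
    (X 1 y - X 0 y) - (X 1 x - X 0 x) ≤ -(γ * (2 * B + 2)) * (y - x) := by
  have hIcc : Icc 0 c ⊆ Icc 0 T := Icc_subset_Icc_right hc
  refine image_sub_le_mul_sub_of_hasDerivAt_le (((hX.2.1 1).sub (hX.2.1 0)).mono hIcc)
    (fun t ht => hX.hasDerivAt_gap (Ioo_subset_Ioo_right hc ht)) (fun t ht => ?_) hx hy hxy
  obtain ⟨hlt, hle⟩ := hgood t ht
  have h01 := sub_pos.2 (hX.2.2.2 t (hIcc (Ioo_subset_Icc_self ht))).1
  have hforce := hD _ ⟨h01, hlt⟩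
  have hF21 := pairForce_le_pairForce hs h01 hle
  have hF20 : pairForce s (X 2 t - X 0 t) ≤ pairForce s (2 * (X 1 t - X 0 t)) :=
    pairForce_le_pairForce hs (by positivity) (by linarith)
  have hσ0 := (abs_le.1 (hσ t (X 0 t) ht.1.le)).2
  have hσ1 := (abs_le.1 (hσ t (X 1 t) ht.1.le)).2
  have := mul_le_mul_of_nonneg_left (show pairForce s (X 2 t - X 1 t) + pairForce s (X 2 t - X 0 t)
    - 2 * pairForce s (X 1 t - X 0 t) + σ t (X 0 t) + σ t (X 1 t) + 2 * δ ≤ -(2 * B + 2) by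
      linarith) hγ
  linarith

lemma HatSys3.mul_sub_le_gap_sub_gap (hX : HatSys3 s γ δ σ a T X) (hs : 0 < s) (hγ : 0 ≤ γ)
    (hσ : ∀ t x, 0 ≤ t → |σ t x| ≤ B) (hδ : δ ≤ 1) {c : ℝ} (hc : c ≤ T)
    (hle : ∀ t ∈ Ioo 0 c, X 1 t - X 0 t ≤ X 2 t - X 1 t)
    {x y : ℝ} (hx : x ∈ Icc 0 c) (hy : y ∈ Icc 0 c) (hxy : x ≤ y) :
    -(2 * (γ * (2 * B + 2))) * (y - x) ≤
      ((X 2 y - X 1 y) - (X 1 y - X 0 y)) - ((X 2 x - X 1 x) - (X 1 x - X 0 x)) := by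
  have hIcc : Icc 0 c ⊆ Icc 0 T := Icc_subset_Icc_right hc
  refine mul_sub_le_image_sub_of_le_hasDerivAt
    ((((hX.2.1 2).sub (hX.2.1 1)).sub ((hX.2.1 1).sub (hX.2.1 0))).mono hIcc)
    (fun t ht => hX.hasDerivAt_gap_sub_gap (Ioo_subset_Ioo_right hc ht)) (fun t ht => ?_) hx hy hxy
  have h01 := sub_pos.2 (hX.2.2.2 t (hIcc (Ioo_subset_Icc_self ht))).1
  have hF21 := pairForce_le_pairForce hs h01 (hle t ht)
  have hσ0 := (abs_le.1 (hσ t (X 0 t) ht.1.le)).2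
  have hσ1 := (abs_le.1 (hσ t (X 1 t) ht.1.le)).2
  have hσ2 := (abs_le.1 (hσ t (X 2 t) ht.1.le)).2
  have := mul_le_mul_of_nonneg_left (show -(2 * (2 * B + 2)) ≤
    3 * (pairForce s (X 1 t - X 0 t) - pairForce s (X 2 t - X 1 t))
      - (σ t (X 0 t) + 2 * σ t (X 1 t) + σ t (X 2 t)) - 4 * δ by linarith) hγ
  linarith

/-- The shrinking of the first gap bounds the elapsed time, and this keeps the difference of
the gaps positive. -/
lemma HatSys3.gap_lt_of_forall_Ico (hX : HatSys3 s γ δ σ a T X) (hs : 0 < s) (hγ : 0 ≤ γ)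
    (hσ : ∀ t x, 0 ≤ t → |σ t x| ≤ B) (hδ : δ ≤ 1) {D : ℝ}
    (hD : ∀ r ∈ Ioo 0 D, 2 * (2 * B + 2) ≤ pairForce s r - pairForce s (2 * r))
    (h0D : X 1 0 - X 0 0 < D) (h0 : 2 * (X 1 0 - X 0 0) < (X 2 0 - X 1 0) - (X 1 0 - X 0 0))
    {c : ℝ} (hc : c ∈ Icc 0 T)
    (hprev : ∀ t ∈ Ico 0 c, X 1 t - X 0 t < D ∧ X 1 t - X 0 t < X 2 t - X 1 t) :
    X 1 c - X 0 c < D ∧ X 1 c - X 0 c < X 2 c - X 1 c := by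
  have hprev' : ∀ t ∈ Ioo 0 c, X 1 t - X 0 t < D ∧ X 1 t - X 0 t ≤ X 2 t - X 1 t :=
    fun t ht => (hprev t (Ioo_subset_Ico_self ht)).imp_right le_of_lt
  have h0c := left_mem_Icc.2 hc.1
  have hcc := right_mem_Icc.2 hc.1
  have hgap := hX.gap_sub_le hs hγ hσ hδ hD hc.2 hprev' h0c hcc hc.1
  have hdiff := hX.mul_sub_le_gap_sub_gap hs hγ hσ hδ hc.2 (fun t ht => (hprev' t ht).2) h0c hcc hc.1
  have hpos := sub_pos.2 (hX.2.2.2 c hc).1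
  have hrate : 0 ≤ γ * (2 * B + 2) * c :=
    mul_nonneg (mul_nonneg hγ (by linarith [(abs_nonneg _).trans (hσ 0 0 le_rfl)])) hc.1
  constructor <;> linarith

lemma HatSys3.gap_lt (hX : HatSys3 s γ δ σ a T X) (hs : 0 < s) (hγ : 0 ≤ γ)
    (hσ : ∀ t x, 0 ≤ t → |σ t x| ≤ B) (hδ : δ ≤ 1) {D : ℝ}
    (hD : ∀ r ∈ Ioo 0 D, 2 * (2 * B + 2) ≤ pairForce s r - pairForce s (2 * r))
    (h0D : X 1 0 - X 0 0 < D) (h0 : 2 * (X 1 0 - X 0 0) < (X 2 0 - X 1 0) - (X 1 0 - X 0 0)) :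
    ∀ t ∈ Icc 0 T, X 1 t - X 0 t < D ∧ X 1 t - X 0 t < X 2 t - X 1 t := by
  have hg : ContinuousOn (fun t => max (X 1 t - X 0 t - D) ((X 1 t - X 0 t) - (X 2 t - X 1 t)))
      (Icc 0 T) := by
    have := hX.2.1 0; have := hX.2.1 1; have := hX.2.1 2
    fun_prop
  simpa only [max_lt_iff, sub_neg] using hg.forall_lt_zero_of_forall_Ico fun c hc hprev => by
    simp only [max_lt_iff, sub_neg] at hprev ⊢
    exact hX.gap_lt_of_forall_Ico hs hγ hσ hδ hD h0D h0 hc hprev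

lemma HatSys3.antitoneOn_gap (hX : HatSys3 s γ δ σ a T X) (hs : 0 < s) (hγ : 0 ≤ γ)
    (hσ : ∀ t x, 0 ≤ t → |σ t x| ≤ B) (hδ : δ ≤ 1) {D : ℝ}
    (hD : ∀ r ∈ Ioo 0 D, 2 * (2 * B + 2) ≤ pairForce s r - pairForce s (2 * r))
    (hgood : ∀ t ∈ Icc 0 T, X 1 t - X 0 t < D ∧ X 1 t - X 0 t < X 2 t - X 1 t) :
    AntitoneOn (fun t => X 1 t - X 0 t) (Icc 0 T) := by
  intro x hx y hy hxy
  have := hX.gap_sub_le hs hγ hσ hδ hD le_rfl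
    (fun t ht => (hgood t (Ioo_subset_Icc_self ht)).imp_right le_of_lt) hx hy hxy
  have hrate : 0 ≤ γ * (2 * B + 2) * (y - x) :=
    mul_nonneg (mul_nonneg hγ (by linarith [(abs_nonneg _).trans (hσ 0 0 le_rfl)]))
      (sub_nonneg.2 hxy)
  linarith

end HatSys3

theorem statement_17
    (s γ : ℝ) (hs : s ∈ Ioo (0:ℝ) 1) (hγ : 0 < γ)
    (σ : ℝ → ℝ → ℝ) (hσ : SigmaOK s σ) :
    ∀ K : ℝ, 1 < K → ∃ M : ℝ, 2*K + 3 < M ∧ ∃ θ₀ > (0:ℝ),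
      ∀ θ ∈ Ioo (0:ℝ) θ₀, ∀ δh ∈ Ioc (0:ℝ) 1, ∀ p₁ p₂ p₃ : ℝ,
        p₂ - p₁ = θ → M*θ ≤ p₃ - p₂ →
        ∀ T : ℝ, 0 < T → ∀ X : Fin 3 → ℝ → ℝ,
          HatSys3 s γ δh σ ![p₁ - θ, p₂ + K*θ, p₃ - θ] T X →
          (∀ t ∈ Icc (0:ℝ) T, X 1 t - X 0 t ≤ X 2 t - X 1 t) ∧
          (∀ t ∈ Icc (0:ℝ) T, ∀ t' ∈ Icc (0:ℝ) T, t ≤ t' →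
            X 1 t' - X 0 t' ≤ X 1 t - X 0 t) := by
  obtain ⟨B, hB⟩ := hσ.bounded
  obtain ⟨D, hD, hDforce⟩ := mem_nhdsGT_iff_exists_Ioo_subset.1
    ((tendsto_pairForce_sub_pairForce_two_mul hs.1).eventually_ge_atTop (2 * (2 * B + 2)))
  intro K hK
  refine ⟨4 * K + 8, by linarith, D / (K + 2), div_pos hD (by linarith), ?_⟩
  rintro θ ⟨hθ, hθD⟩ δ ⟨-, hδ⟩ p₁ p₂ p₃ hp₁ hp₃ T - X hX
  rw [lt_div_iff₀ (by linarith)] at hθD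
  have h0 : X 1 0 - X 0 0 = (K + 2) * θ ∧ (2 * K + 5) * θ ≤ (X 2 0 - X 1 0) - (X 1 0 - X 0 0) := by
    simp only [hX.1, Matrix.cons_val_zero, Matrix.cons_val_one, Matrix.cons_val]
    constructor <;> linarith
  have hgood := hX.gap_lt hs.1 hγ.le hB hδ hDforce (by linarith) (by linarith)
  exact ⟨fun t ht => (hgood t ht).2.le,
    fun t ht t' ht' => hX.antitoneOn_gap hs.1 hγ.le hB hδ hDforce hgood ht ht'⟩
end
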